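/- arXiv:1811.12294 — 2 statements merged into one kernel-verified Lean document; each statement's English description precedes it below -/
import Mathlib

section
/- Under the framework assumptions (Ax1)–(Ax5), if (X, ξ, x₀) is path-reachable (the family of all runs of paths in it is jointly epic) and h : (X, ξ, x₀) → (Y, ζ, y₀) is a lax homomorphism of I-pointed TF-coalgebras that is Path(I,F+1)-open, then h is a strict coalgebra homomorphism, i.e. TFh ∘ ξ = ζ ∘ h. -/
open CategoryTheory CategoryTheory.Limits

universe v u

variable {C : Type u} [Category.{v} C]

/-- A morphism `s : S ⟶ G.obj R` is `G`-precise. -/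
def Precise (G : C ⥤ C) {S R : C} (s : S ⟶ G.obj R) : Prop :=
  ∀ {A D : C} (f : S ⟶ G.obj A) (g : R ⟶ D) (h : A ⟶ D),
    f ≫ G.map h = s ≫ G.map g → ∃ d : R ⟶ A, s ≫ G.map d = f ∧ d ≫ h = g

/-- `G` admits precise factorizations w.r.t. a class `S` of objects. -/
def AdmitsPreciseFact (G : C ⥤ C) (S : Set C) : Prop :=
  ∀ {X Y : C} (f : X ⟶ G.obj Y), X ∈ S →
    ∃ (Y' : C) (h : Y' ⟶ Y) (f' : X ⟶ G.obj Y'),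
      Y' ∈ S ∧ Precise G f' ∧ f' ≫ G.map h = f

variable [HasFiniteCoproducts C] [HasTerminal C]

/-- The functor `F + 1 : X ↦ F X + 1`. -/
noncomputable def Fp1 (F : C ⥤ C) : C ⥤ C where
  obj X := F.obj X ⨿ ⊤_ C
  map f := coprod.map (F.map f) (𝟙 _)

/-- A functorial partial order on the hom-sets `C(X, T Y)`. -/
structure HomOrder (T : C ⥤ C) where
  le : ∀ {X Y : C}, (X ⟶ T.obj Y) → (X ⟶ T.obj Y) → Prop
  le_refl : ∀ {X Y : C} (f : X ⟶ T.obj Y), le f f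
  le_trans : ∀ {X Y : C} {f g h : X ⟶ T.obj Y}, le f g → le g h → le f h
  le_antisymm : ∀ {X Y : C} {f g : X ⟶ T.obj Y}, le f g → le g f → f = g
  le_comp : ∀ {X' X Y Y' : C} (g : X' ⟶ X) (h : Y ⟶ Y') {f₁ f₂ : X ⟶ T.obj Y},
    le f₁ f₂ → le (g ≫ f₁ ≫ T.map h) (g ≫ f₂ ≫ T.map h)

/-- The copairing `[η_Y, ⊥_Y] : Y + 1 ⟶ T Y`. -/
noncomputable def cop (T : C ⥤ C) (η : 𝟭 C ⟶ T)
    (bot : (Functor.const C).obj (⊤_ C) ⟶ T) (Y : C) : (Y ⨿ ⊤_ C) ⟶ T.obj Y :=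
  coprod.desc (η.app Y) (bot.app Y)

/-- An `I`-pointed `TF`-coalgebra. -/
structure Coalg (T F : C ⥤ C) (I : C) where
  X : C
  str : X ⟶ T.obj (F.obj X)
  pt : I ⟶ X

/-- A lax homomorphism of `I`-pointed `TF`-coalgebras. -/
def IsLaxHom {T F : C ⥤ C} {I : C} (ord : HomOrder T) (A B : Coalg T F I)
    (f : A.X ⟶ B.X) : Prop :=
  A.pt ≫ f = B.pt ∧ ord.le (A.str ≫ T.map (F.map f)) (f ≫ B.str)

/-- A path of length `n`: a chain of `(F+1)`-precise morphisms starting at `I`. -/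
structure FPath1 (F : C ⥤ C) (I : C) (n : ℕ) where
  P : ℕ → C
  hP0 : P 0 = I
  p : ∀ k, k < n → (P k ⟶ (Fp1 F).obj (P (k + 1)))
  precise : ∀ k (h : k < n), Precise (Fp1 F) (p k h)

/-- A path morphism between paths of lengths `n ≤ m`. -/
structure FPath1Mor {F : C ⥤ C} {I : C} {n m : ℕ} (Pp : FPath1 F I n)
    (Qq : FPath1 F I m) (hnm : n ≤ m) where
  φ : ∀ k, k ≤ n → (Pp.P k ⟶ Qq.P k)
  φ0 : φ 0 (Nat.zero_le n) = eqToHom (Pp.hP0.trans Qq.hP0.symm)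
  comm : ∀ k (h : k < n),
    φ k h.le ≫ Qq.p k (lt_of_lt_of_le h hnm) =
      Pp.p k h ≫ (Fp1 F).map (φ (k + 1) h)

/-- The functor `J`, on objects: the `I`-pointed `TF`-coalgebra induced by a path. -/
noncomputable def Jobj (T F : C ⥤ C) (η : 𝟭 C ⟶ T)
    (bot : (Functor.const C).obj (⊤_ C) ⟶ T) {I : C} {n : ℕ}
    (Pp : FPath1 F I n) : Coalg T F I where
  X := ∐ fun k : Fin (n + 1) => Pp.P k
  str := Sigma.desc fun k =>
    if h : (k : ℕ) < n then
      Pp.p k h ≫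
        coprod.map (F.map (Sigma.ι (fun j : Fin (n + 1) => Pp.P j) ⟨(k : ℕ) + 1, by omega⟩))
          (𝟙 _) ≫
        cop T η bot _
    else
      terminal.from _ ≫ bot.app _
  pt := eqToHom Pp.hP0.symm ≫ Sigma.ι (fun j : Fin (n + 1) => Pp.P j) ⟨0, by omega⟩

/-- The functor `J`, on morphisms. -/
noncomputable def Jmor (T F : C ⥤ C) (η : 𝟭 C ⟶ T)
    (bot : (Functor.const C).obj (⊤_ C) ⟶ T) {I : C} {n m : ℕ}
    {Pp : FPath1 F I n} {Qq : FPath1 F I m} {hnm : n ≤ m}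
    (φ : FPath1Mor Pp Qq hnm) :
    (Jobj T F η bot Pp).X ⟶ (Jobj T F η bot Qq).X :=
  Sigma.desc fun k : Fin (n + 1) =>
    φ.φ k (by omega) ≫ Sigma.ι (fun j : Fin (m + 1) => Qq.P j) ⟨(k : ℕ), by omega⟩

/-- `h` is `Path(I,F+1)`-open. -/
def IsPathOpen {T F : C ⥤ C} {I : C} (η : 𝟭 C ⟶ T)
    (bot : (Functor.const C).obj (⊤_ C) ⟶ T) (ord : HomOrder T)
    {A B : Coalg T F I} (h : A.X ⟶ B.X) : Prop :=
  ∀ {n m : ℕ} (hnm : n ≤ m) (Pp : FPath1 F I n) (Qq : FPath1 F I m)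
    (φ : FPath1Mor Pp Qq hnm)
    (x : (Jobj T F η bot Pp).X ⟶ A.X) (y : (Jobj T F η bot Qq).X ⟶ B.X),
    IsLaxHom ord (Jobj T F η bot Pp) A x →
    IsLaxHom ord (Jobj T F η bot Qq) B y →
    Jmor T F η bot φ ≫ y = x ≫ h →
    ∃ x' : (Jobj T F η bot Qq).X ⟶ A.X,
      IsLaxHom ord (Jobj T F η bot Qq) A x' ∧
      Jmor T F η bot φ ≫ x' = x ∧ x' ≫ h = y

/-- least upper bound w.r.t. a hom-order. -/
def IsLUBhom {T : C ⥤ C} (ord : HomOrder T) {X Y : C}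
    (s : Set (X ⟶ T.obj Y)) (f : X ⟶ T.obj Y) : Prop :=
  (∀ g ∈ s, ord.le g f) ∧ ∀ u, (∀ g ∈ s, ord.le g u) → ord.le f u

/-- Path-reachability: the family of all runs of paths is jointly epic. -/
def PathReachable {T F : C ⥤ C} {I : C} (η : 𝟭 C ⟶ T)
    (bot : (Functor.const C).obj (⊤_ C) ⟶ T) (ord : HomOrder T)
    (A : Coalg T F I) : Prop :=
  ∀ {W : C} (u v : A.X ⟶ W),
    (∀ (n : ℕ) (Pp : FPath1 F I n) (r : (Jobj T F η bot Pp).X ⟶ A.X),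
      IsLaxHom ord (Jobj T F η bot Pp) A r → r ≫ u = r ≫ v) → u = v

set_option linter.unusedSectionVars false

section Aux

variable {T F : C ⥤ C} {I : C}

/-- Axiom 2 as a predicate. -/
def Ax2 (T : C ⥤ C) (ord : HomOrder T) : Prop :=
  ∀ (ι : Type v) {Y Z : C} (Xf : ι → C) (e : ∀ i, Xf i ⟶ Y),
      (∀ {W : C} (u v : Y ⟶ W), (∀ i, e i ≫ u = e i ≫ v) → u = v) →
      ∀ (f g : Y ⟶ T.obj Z), (∀ i, ord.le (e i ≫ f) (e i ≫ g)) → ord.le f g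

lemma homle_comp_l (ord : HomOrder T) {X' X Y : C} (g : X' ⟶ X)
    {f₁ f₂ : X ⟶ T.obj Y} (hle : ord.le f₁ f₂) : ord.le (g ≫ f₁) (g ≫ f₂) := by
  have := ord.le_comp g (𝟙 Y) hle
  simpa using this

lemma homle_comp_r (ord : HomOrder T) {X Y Y' : C} (h : Y ⟶ Y')
    {f₁ f₂ : X ⟶ T.obj Y} (hle : ord.le f₁ f₂) :
    ord.le (f₁ ≫ T.map h) (f₂ ≫ T.map h) := by
  have := ord.le_comp (𝟙 X) h hle
  simpa using this

lemma bot_nat (T : C ⥤ C) (bot : (Functor.const C).obj (⊤_ C) ⟶ T) {Y Z : C}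
    (m : Y ⟶ Z) : bot.app Y ≫ T.map m = bot.app Z := by
  have := bot.naturality m
  simpa using this.symm

lemma cop_nat (T : C ⥤ C) (η : 𝟭 C ⟶ T) (bot : (Functor.const C).obj (⊤_ C) ⟶ T)
    {Y Z : C} (m : Y ⟶ Z) :
    cop T η bot Y ≫ T.map m = coprod.map m (𝟙 _) ≫ cop T η bot Z := by
  apply coprod.hom_ext
  · unfold cop
    rw [coprod.inl_desc_assoc, coprod.inl_map_assoc, coprod.inl_desc]
    exact (η.naturality m).symm
  · unfold cop
    rw [coprod.inr_desc_assoc, coprod.inr_map_assoc, coprod.inr_desc, Category.id_comp]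
    exact bot_nat T bot m

lemma Fp1_map (F : C ⥤ C) {X Y : C} (f : X ⟶ Y) :
    (Fp1 F).map f = coprod.map (F.map f) (𝟙 _) := rfl

lemma laxhom_comp (ord : HomOrder T) {A₁ A₂ A₃ : Coalg T F I}
    {f : A₁.X ⟶ A₂.X} {g : A₂.X ⟶ A₃.X}
    (hf : IsLaxHom ord A₁ A₂ f) (hg : IsLaxHom ord A₂ A₃ g) :
    IsLaxHom ord A₁ A₃ (f ≫ g) := by
  constructor
  · rw [← Category.assoc, hf.1, hg.1]
  · have h1 : ord.le ((A₁.str ≫ T.map (F.map f)) ≫ T.map (F.map g))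
        ((f ≫ A₂.str) ≫ T.map (F.map g)) := homle_comp_r ord _ hf.2
    have h2 : ord.le (f ≫ A₂.str ≫ T.map (F.map g)) (f ≫ g ≫ A₃.str) :=
      homle_comp_l ord f hg.2
    have : ord.le (A₁.str ≫ T.map (F.map (f ≫ g))) (f ≫ A₂.str ≫ T.map (F.map g)) := by
      simpa using h1
    have := ord.le_trans this h2
    simpa using this

end Aux
section Aux2
set_option linter.unusedSectionVars false

variable {T F : C ⥤ C} {I : C}
variable (η : 𝟭 C ⟶ T) (bot : (Functor.const C).obj (⊤_ C) ⟶ T) (ord : HomOrder T)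

lemma le_sigma (hax2 : Ax2 T ord) {k : ℕ} (P : Fin k → C) {Z : C}
    (f g : (∐ P) ⟶ T.obj Z)
    (hc : ∀ j, ord.le (Sigma.ι P j ≫ f) (Sigma.ι P j ≫ g)) : ord.le f g :=
  hax2 (ULift (Fin k)) (fun i => P i.down) (fun i => Sigma.ι P i.down)
    (fun u v hu => Sigma.hom_ext u v fun j => hu ⟨j⟩) f g (fun i => hc i.down)

lemma ι_Jobj_str {n : ℕ} (Pp : FPath1 F I n) (k : Fin (n + 1)) (hk : (k : ℕ) < n) :
    Sigma.ι (fun j : Fin (n + 1) => Pp.P j) k ≫ (Jobj T F η bot Pp).str =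
      Pp.p k hk ≫
        coprod.map (F.map (Sigma.ι (fun j : Fin (n + 1) => Pp.P j) ⟨(k : ℕ) + 1, by omega⟩))
          (𝟙 _) ≫ cop T η bot _ := by
  show Sigma.ι (fun j : Fin (n + 1) => Pp.P j) k ≫ Sigma.desc _ = _
  erw [Sigma.ι_desc, dif_pos hk]

lemma ι_Jobj_str_top {n : ℕ} (Pp : FPath1 F I n) (k : Fin (n + 1)) (hk : ¬ (k : ℕ) < n) :
    Sigma.ι (fun j : Fin (n + 1) => Pp.P j) k ≫ (Jobj T F η bot Pp).str =
      terminal.from _ ≫ bot.app (F.obj (Jobj T F η bot Pp).X) := by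
  show Sigma.ι (fun j : Fin (n + 1) => Pp.P j) k ≫ Sigma.desc _ = _
  erw [Sigma.ι_desc, dif_neg hk]
  rfl

lemma ι_Jmor {n m : ℕ} {Pp : FPath1 F I n} {Qq : FPath1 F I m} {hnm : n ≤ m}
    (φ : FPath1Mor Pp Qq hnm) (k : Fin (n + 1)) :
    Sigma.ι (fun j : Fin (n + 1) => Pp.P j) k ≫ Jmor T F η bot φ =
      φ.φ k (by omega) ≫ Sigma.ι (fun j : Fin (m + 1) => Qq.P j) ⟨(k : ℕ), by omega⟩ := by
  show Sigma.ι (fun j : Fin (n + 1) => Pp.P j) k ≫ Sigma.desc _ = _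
  erw [Sigma.ι_desc]
  rfl

lemma Jmor_lax (hax2 : Ax2 T ord)
    (hax3 : ∀ {X Y : C} (f : X ⟶ T.obj Y), ord.le (terminal.from X ≫ bot.app Y) f)
    {n m : ℕ} {Pp : FPath1 F I n} {Qq : FPath1 F I m} {hnm : n ≤ m}
    (φ : FPath1Mor Pp Qq hnm) :
    IsLaxHom ord (Jobj T F η bot Pp) (Jobj T F η bot Qq) (Jmor T F η bot φ) := by
  constructor
  · show (eqToHom Pp.hP0.symm ≫ Sigma.ι (fun j : Fin (n + 1) => Pp.P j) ⟨0, by omega⟩) ≫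
      Jmor T F η bot φ = eqToHom Qq.hP0.symm ≫ Sigma.ι (fun j : Fin (m + 1) => Qq.P j) ⟨0, by omega⟩
    erw [Category.assoc, ι_Jmor]
    have h0 : φ.φ ((⟨0, by omega⟩ : Fin (n + 1)) : ℕ) (by omega) =
        eqToHom (Pp.hP0.trans Qq.hP0.symm) := φ.φ0
    erw [h0, ← Category.assoc, eqToHom_trans]
    rfl
  · apply le_sigma ord hax2
    intro k
    by_cases hk : (k : ℕ) < n
    · have hL : Sigma.ι (fun j : Fin (n + 1) => Pp.P j) k ≫
          ((Jobj T F η bot Pp).str ≫ T.map (F.map (Jmor T F η bot φ))) =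
          Pp.p k hk ≫ coprod.map (F.map (φ.φ ((k : ℕ) + 1) hk ≫
            Sigma.ι (fun j : Fin (m + 1) => Qq.P j) ⟨(k : ℕ) + 1, by omega⟩)) (𝟙 _) ≫
            cop T η bot _ := by
        erw [← Category.assoc, ι_Jobj_str η bot Pp k hk]
        erw [Category.assoc, Category.assoc]
        erw [cop_nat]
        erw [← Category.assoc (coprod.map _ _) (coprod.map _ _), coprod.map_map,
          Category.comp_id, ← F.map_comp, ι_Jmor]
        rfl
      have hR : Sigma.ι (fun j : Fin (n + 1) => Pp.P j) k ≫
          (Jmor T F η bot φ ≫ (Jobj T F η bot Qq).str) =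
          Pp.p k hk ≫ coprod.map (F.map (φ.φ ((k : ℕ) + 1) hk ≫
            Sigma.ι (fun j : Fin (m + 1) => Qq.P j) ⟨(k : ℕ) + 1, by omega⟩)) (𝟙 _) ≫
            cop T η bot _ := by
        erw [← Category.assoc, ι_Jmor, Category.assoc,
          ι_Jobj_str η bot Qq ⟨(k : ℕ), by omega⟩ (lt_of_lt_of_le hk hnm),
          ← Category.assoc, φ.comm k hk]
        simp only [Fp1_map, Category.assoc]
        erw [Category.assoc]
        erw [← Category.assoc (coprod.map _ _) (coprod.map _ _), coprod.map_map,
          Category.comp_id, ← F.map_comp]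
        rfl
      erw [hL, hR]
      exact ord.le_refl _
    · erw [← Category.assoc, ι_Jobj_str_top η bot Pp k hk, Category.assoc, bot_nat]
      exact hax3 _

end Aux2
section Aux3
set_option linter.unusedSectionVars false

variable {T F : C ⥤ C} {I : C}
variable (η : 𝟭 C ⟶ T) (bot : (Functor.const C).obj (⊤_ C) ⟶ T) (ord : HomOrder T)

lemma precise_iso {G : C ⥤ C} {X X' R R' : C} {s : X ⟶ G.obj R} (hs : Precise G s)
    (u : X' ⟶ X) (w : R ⟶ R') [IsIso u] [IsIso w] :
    Precise G (u ≫ s ≫ G.map w) := by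
  intro A D f g h hcomm
  have hc2 : (inv u ≫ f) ≫ G.map h = s ≫ G.map (w ≫ g) := by
    rw [Category.assoc, hcomm]
    simp [G.map_comp]
  obtain ⟨d, hd1, hd2⟩ := hs (inv u ≫ f) (w ≫ g) h hc2
  refine ⟨inv w ≫ d, ?_, ?_⟩
  · simp [G.map_comp, hd1]
  · rw [Category.assoc, hd2]
    simp

lemma pathObjS (S : Set C) (hiso : ∀ {X Y : C}, X ∈ S → (X ≅ Y) → Y ∈ S) (hI : I ∈ S)
    (hax1 : AdmitsPreciseFact (Fp1 F) S) {n : ℕ} (Q : FPath1 F I n) :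
    ∀ k, k ≤ n → Q.P k ∈ S := by
  intro k
  induction k with
  | zero => exact fun _ => hiso hI (eqToIso Q.hP0.symm)
  | succ k ih =>
    intro hk1
    have hk : k < n := hk1
    obtain ⟨Y', t, f', hY', hprec, hfact⟩ := hax1 (Q.p k hk) (ih hk.le)
    obtain ⟨d, hd1, hd2⟩ := Q.precise k hk f' (𝟙 _) t (by simpa using hfact)
    obtain ⟨e, he1, he2⟩ := hprec (Q.p k hk) (𝟙 _) d (by simpa using hd1)
    have het : e = t := by
      calc e = (e ≫ d) ≫ t := by rw [Category.assoc, hd2, Category.comp_id]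
      _ = t := by rw [he2, Category.id_comp]
    exact hiso hY' ⟨t, d, by rw [← het]; exact he2, hd2⟩

/-- Underlying object family of the extension of a path by one object. -/
def extP {n : ℕ} (Q : FPath1 F I n) (Y' : C) : ℕ → C :=
  fun j => if j = n + 1 then Y' else Q.P j

lemma extP_low {n : ℕ} (Q : FPath1 F I n) (Y' : C) {j : ℕ} (hj : j ≠ n + 1) :
    extP Q Y' j = Q.P j := if_neg hj

lemma extP_top {n : ℕ} (Q : FPath1 F I n) (Y' : C) : extP Q Y' (n + 1) = Y' := if_pos rfl

/-- Extension of a path by one precise step at the end. -/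
noncomputable def extPath {n : ℕ} (Q : FPath1 F I n) (Y' : C) (q : Q.P n ⟶ (Fp1 F).obj Y')
    (hq : Precise (Fp1 F) q) : FPath1 F I (n + 1) where
  P := extP Q Y'
  hP0 := (extP_low Q Y' (by omega)).trans Q.hP0
  p k hk :=
    if h : k < n then
      eqToHom (extP_low Q Y' (by omega)) ≫ Q.p k h ≫
        (Fp1 F).map (eqToHom (extP_low Q Y' (by omega)).symm)
    else
      eqToHom (show extP Q Y' k = Q.P n by
        have hkn : k = n := by omega
        subst hkn; exact extP_low Q Y' (by omega)) ≫ q ≫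
        (Fp1 F).map (eqToHom (show extP Q Y' (k + 1) = Y' by
          have hkn : k = n := by omega
          subst hkn; exact extP_top Q Y').symm)
  precise k hk := by
    split
    · exact precise_iso (Q.precise k _) _ _
    · exact precise_iso hq _ _

/-- The inclusion path morphism into the extension. -/
noncomputable def extMor {n : ℕ} (Q : FPath1 F I n) (Y' : C) (q : Q.P n ⟶ (Fp1 F).obj Y')
    (hq : Precise (Fp1 F) q) : FPath1Mor Q (extPath Q Y' q hq) (Nat.le_succ n) where
  φ j hj := eqToHom (extP_low Q Y' (by omega)).symm
  φ0 := rfl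
  comm k hk := by
    dsimp only [extPath]
    rw [dif_pos hk]
    rw [← Category.assoc, eqToHom_trans, eqToHom_refl, Category.id_comp]

/-- Truncation of a path. -/
def truncPath {m : ℕ} (Q : FPath1 F I m) (k : ℕ) (hk : k ≤ m) : FPath1 F I k where
  P := Q.P
  hP0 := Q.hP0
  p j hj := Q.p j (lt_of_lt_of_le hj hk)
  precise j hj := Q.precise j _

/-- The inclusion path morphism of a truncation. -/
def truncMor {m : ℕ} (Q : FPath1 F I m) (k : ℕ) (hk : k ≤ m) :
    FPath1Mor (truncPath Q k hk) Q hk where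
  φ j _ := 𝟙 _
  φ0 := by
    erw [eqToHom_refl]
  comm j hj := by
    dsimp only [truncPath]
    simp only [Fp1_map, Category.id_comp, F.map_id, coprod.map_id_id, Category.comp_id]
    exact (Category.comp_id _).symm

end Aux3
section Aux4
set_option linter.unusedSectionVars false
set_option maxHeartbeats 1000000

variable {T F : C ⥤ C} {I : C}
variable (η : 𝟭 C ⟶ T) (bot : (Functor.const C).obj (⊤_ C) ⟶ T) (ord : HomOrder T)

lemma Jobj_pt {n : ℕ} (Pp : FPath1 F I n) :
    (Jobj T F η bot Pp).pt =
      eqToHom Pp.hP0.symm ≫ Sigma.ι (fun j : Fin (n + 1) => Pp.P j) ⟨0, by omega⟩ := rfl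

lemma ι_Jobj_str_comp {n : ℕ} (Pp : FPath1 F I n) (k : Fin (n + 1)) (hk : (k : ℕ) < n)
    {Z : C} (w : (Jobj T F η bot Pp).X ⟶ Z) :
    Sigma.ι (fun j : Fin (n + 1) => Pp.P j) k ≫ (Jobj T F η bot Pp).str ≫ T.map (F.map w) =
      Pp.p k hk ≫
        coprod.map (F.map (Sigma.ι (fun j : Fin (n + 1) => Pp.P j) ⟨(k : ℕ) + 1, by omega⟩ ≫ w))
          (𝟙 _) ≫ cop T η bot (F.obj Z) := by
  erw [← Category.assoc, ι_Jobj_str η bot Pp k hk]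
  erw [Category.assoc, Category.assoc]
  erw [cop_nat, ← Category.assoc (coprod.map _ _) (coprod.map _ _), coprod.map_map,
    Category.comp_id, ← F.map_comp]
  rfl

lemma ι_Jobj_str_comp_top {n : ℕ} (Pp : FPath1 F I n) (k : Fin (n + 1)) (hk : ¬ (k : ℕ) < n)
    {Z : C} (w : (Jobj T F η bot Pp).X ⟶ Z) :
    Sigma.ι (fun j : Fin (n + 1) => Pp.P j) k ≫ (Jobj T F η bot Pp).str ≫ T.map (F.map w) =
      terminal.from _ ≫ bot.app (F.obj Z) := by
  erw [← Category.assoc, ι_Jobj_str_top η bot Pp k hk, Category.assoc, bot_nat]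

lemma key_top
    (S : Set C) (hiso : ∀ {X Y : C}, X ∈ S → (X ≅ Y) → Y ∈ S) (hI : I ∈ S)
    (hax1 : AdmitsPreciseFact (Fp1 F) S) (hax2 : Ax2 T ord)
    (hax3 : ∀ {X Y : C} (f : X ⟶ T.obj Y), ord.le (terminal.from X ≫ bot.app Y) f)
    (hax4 : ∀ {X Y : C} (f : X ⟶ T.obj Y), X ∈ S →
      IsLUBhom ord {g | ∃ f' : X ⟶ Y ⨿ ⊤_ C, g = f' ≫ cop T η bot Y ∧ ord.le g f} f)
    {A B : Coalg T F I} {h : A.X ⟶ B.X}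
    (hlax : IsLaxHom ord A B h) (hopen : IsPathOpen η bot ord h)
    {n : ℕ} (Q : FPath1 F I n) (r : (Jobj T F η bot Q).X ⟶ A.X)
    (hr : IsLaxHom ord (Jobj T F η bot Q) A r) :
    ord.le (Sigma.ι (fun j : Fin (n + 1) => Q.P j) ⟨n, by omega⟩ ≫ r ≫ h ≫ B.str)
      (Sigma.ι (fun j : Fin (n + 1) => Q.P j) ⟨n, by omega⟩ ≫ r ≫ A.str ≫ T.map (F.map h)) := by
  have hQn : Q.P n ∈ S := pathObjS S hiso hI hax1 Q n le_rfl
  refine (hax4 (Sigma.ι (fun j : Fin (n + 1) => Q.P j) ⟨n, by omega⟩ ≫ r ≫ h ≫ B.str) hQn).2 _ ?_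
  rintro g ⟨f', rfl, hle⟩
  obtain ⟨Y', t, f'', hY', hprec, hfact⟩ := hax1 (X := Q.P n) (Y := B.X) f' hQn
  let y : (Jobj T F η bot (extPath Q Y' f'' hprec)).X ⟶ B.X :=
    Sigma.desc fun k : Fin (n + 1 + 1) =>
      if hk : (k : ℕ) ≤ n then
        eqToHom (extP_low Q Y' (by omega)) ≫
          Sigma.ι (fun j : Fin (n + 1) => Q.P j) ⟨(k : ℕ), by omega⟩ ≫ r ≫ h
      else
        eqToHom (show extP Q Y' (k : ℕ) = Y' by
          have hke : (k : ℕ) = n + 1 := by omega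
          rw [hke]; exact extP_top Q Y') ≫ t
  have hy_low : ∀ (k : Fin (n + 1 + 1)) (hk : (k : ℕ) ≤ n),
      Sigma.ι (fun j : Fin (n + 1 + 1) => (extPath Q Y' f'' hprec).P j) k ≫ y =
        eqToHom (extP_low Q Y' (by omega)) ≫
          Sigma.ι (fun j : Fin (n + 1) => Q.P j) ⟨(k : ℕ), by omega⟩ ≫ r ≫ h := by
    intro k hk
    show Sigma.ι _ k ≫ Sigma.desc _ = _
    rw [Sigma.ι_desc, dif_pos hk]
    rfl
  have hy_top : ∀ (k : Fin (n + 1 + 1)) (hk : ¬ (k : ℕ) ≤ n),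
      Sigma.ι (fun j : Fin (n + 1 + 1) => (extPath Q Y' f'' hprec).P j) k ≫ y =
        eqToHom (show extP Q Y' (k : ℕ) = Y' by
          have hke : (k : ℕ) = n + 1 := by omega
          rw [hke]; exact extP_top Q Y') ≫ t := by
    intro k hk
    show Sigma.ι _ k ≫ Sigma.desc _ = _
    rw [Sigma.ι_desc, dif_neg hk]
    rfl
  have hylax : IsLaxHom ord (Jobj T F η bot (extPath Q Y' f'' hprec)) B y := by
    constructor
    · erw [Jobj_pt, Category.assoc, hy_low ⟨0, by omega⟩ (by exact Nat.zero_le n),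
        ← hlax.1, ← hr.1, Jobj_pt]
      erw [Category.assoc, Category.assoc, eqToHom_trans_assoc]
      rfl
    · apply le_sigma ord hax2
      intro k
      by_cases hk1 : (k : ℕ) < n
      · have hLeq : Sigma.ι (fun j : Fin (n + 1 + 1) => (extPath Q Y' f'' hprec).P j) k ≫
            ((Jobj T F η bot (extPath Q Y' f'' hprec)).str ≫ T.map (F.map y)) =
            (eqToHom (extP_low Q Y' (by omega)) ≫
              Sigma.ι (fun j : Fin (n + 1) => Q.P j) ⟨(k : ℕ), by omega⟩) ≫
              ((Jobj T F η bot Q).str ≫ T.map (F.map (r ≫ h))) := by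
          rw [ι_Jobj_str_comp η bot (extPath Q Y' f'' hprec) k (by omega)]
          rw [hy_low ⟨(k : ℕ) + 1, by omega⟩ (by exact hk1)]
          dsimp only [extPath]
          erw [dif_pos hk1]
          simp only [Fp1_map, Category.assoc]
          erw [Category.assoc]
          erw [← Category.assoc (coprod.map _ _) (coprod.map _ _), coprod.map_map,
            Category.comp_id, ← F.map_comp]
          simp only [eqToHom_trans_assoc, eqToHom_refl, Category.id_comp, Category.assoc]
          rw [ι_Jobj_str_comp η bot Q ⟨(k : ℕ), by omega⟩ hk1 (r ≫ h)]
          rfl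
        have hReq : Sigma.ι (fun j : Fin (n + 1 + 1) => (extPath Q Y' f'' hprec).P j) k ≫
            (y ≫ B.str) =
            (eqToHom (extP_low Q Y' (by omega)) ≫
              Sigma.ι (fun j : Fin (n + 1) => Q.P j) ⟨(k : ℕ), by omega⟩) ≫
              ((r ≫ h) ≫ B.str) := by
          rw [← Category.assoc, hy_low k (by omega)]
          simp only [Category.assoc]
          erw [Category.assoc, Category.assoc]
          rfl
        erw [hLeq, hReq]
        exact homle_comp_l ord _ (laxhom_comp ord hr hlax).2
      · by_cases hk2 : (k : ℕ) = n
        · have hkeq : k = ⟨n, Nat.lt_succ_of_lt (Nat.lt_succ_self n)⟩ := Fin.ext hk2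
          rw [hkeq]
          have hLeq : Sigma.ι (fun j : Fin (n + 1 + 1) => (extPath Q Y' f'' hprec).P j)
              ⟨n, Nat.lt_succ_of_lt (Nat.lt_succ_self n)⟩ ≫
              ((Jobj T F η bot (extPath Q Y' f'' hprec)).str ≫ T.map (F.map y)) =
              eqToHom (extP_low Q Y' (by omega)) ≫ (f' ≫ cop T η bot (F.obj B.X)) := by
            rw [ι_Jobj_str_comp η bot (extPath Q Y' f'' hprec)
              ⟨n, Nat.lt_succ_of_lt (Nat.lt_succ_self n)⟩ (by exact Nat.lt_succ_self n)]
            rw [hy_top ⟨n + 1, by omega⟩ (by exact Nat.not_succ_le_self n)]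
            dsimp only [extPath]
            erw [dif_neg (by omega : ¬ n < n)]
            simp only [Fp1_map, Category.assoc]
            erw [Category.assoc]
            erw [← Category.assoc (coprod.map _ _) (coprod.map _ _), coprod.map_map,
              Category.comp_id, ← F.map_comp]
            simp only [eqToHom_trans_assoc, eqToHom_refl, Category.id_comp]
            erw [← Fp1_map, ← Category.assoc f'', hfact]
          have hReq : Sigma.ι (fun j : Fin (n + 1 + 1) => (extPath Q Y' f'' hprec).P j)
              ⟨n, Nat.lt_succ_of_lt (Nat.lt_succ_self n)⟩ ≫ (y ≫ B.str) =
              eqToHom (extP_low Q Y' (by omega)) ≫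
                (Sigma.ι (fun j : Fin (n + 1) => Q.P j) ⟨n, by omega⟩ ≫ r ≫ h ≫ B.str) := by
            rw [← Category.assoc,
              hy_low ⟨n, Nat.lt_succ_of_lt (Nat.lt_succ_self n)⟩ (by exact Nat.le_refl n)]
            simp only [Category.assoc]
            erw [Category.assoc, Category.assoc, Category.assoc]
            rfl
          erw [hLeq, hReq]
          exact homle_comp_l ord _ hle
        · erw [ι_Jobj_str_comp_top η bot (extPath Q Y' f'' hprec) k
            (by have := k.isLt; omega)]
          exact hax3 _
  have hsquare : Jmor T F η bot (extMor Q Y' f'' hprec) ≫ y = r ≫ h := by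
    apply Sigma.hom_ext
    intro k
    erw [← Category.assoc, ι_Jmor, Category.assoc,
      hy_low ⟨(k : ℕ), by omega⟩ (by exact Nat.lt_succ_iff.mp k.isLt)]
    dsimp only [extMor]
    erw [← Category.assoc, eqToHom_trans, eqToHom_refl, Category.id_comp]
    rfl
  obtain ⟨x', hx'lax, hx'1, hx'2⟩ := hopen (Nat.le_succ n) Q (extPath Q Y' f'' hprec)
    (extMor Q Y' f'' hprec) r y hr hylax hsquare
  have hstep := ord.le_comp (eqToHom (extP_low Q Y' (j := n) (by omega)).symm ≫
    Sigma.ι (fun j : Fin (n + 1 + 1) => (extPath Q Y' f'' hprec).P j)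
      ⟨n, Nat.lt_succ_of_lt (Nat.lt_succ_self n)⟩)
    (F.map h) hx'lax.2
  have hA : (eqToHom (extP_low Q Y' (j := n) (by omega)).symm ≫
      Sigma.ι (fun j : Fin (n + 1 + 1) => (extPath Q Y' f'' hprec).P j)
        ⟨n, Nat.lt_succ_of_lt (Nat.lt_succ_self n)⟩) ≫
      ((Jobj T F η bot (extPath Q Y' f'' hprec)).str ≫ T.map (F.map x')) ≫ T.map (F.map h) =
      f' ≫ cop T η bot (F.obj B.X) := by
    simp only [Category.assoc, ← T.map_comp, ← F.map_comp]
    repeat erw [Category.assoc]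
    erw [← T.map_comp, ← F.map_comp, hx'2]
    erw [ι_Jobj_str_comp η bot (extPath Q Y' f'' hprec)
      ⟨n, Nat.lt_succ_of_lt (Nat.lt_succ_self n)⟩ (by exact Nat.lt_succ_self n) y]
    rw [hy_top ⟨n + 1, by omega⟩ (by exact Nat.not_succ_le_self n)]
    dsimp only [extPath]
    erw [dif_neg (by omega : ¬ n < n)]
    simp only [Fp1_map, Category.assoc]
    erw [Category.assoc]
    erw [← Category.assoc (coprod.map _ _) (coprod.map _ _), coprod.map_map,
      Category.comp_id, ← F.map_comp]
    simp only [eqToHom_trans_assoc, eqToHom_refl, Category.id_comp]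
    erw [← Fp1_map, ← Category.assoc f'', hfact]
  have hB : (eqToHom (extP_low Q Y' (j := n) (by omega)).symm ≫
      Sigma.ι (fun j : Fin (n + 1 + 1) => (extPath Q Y' f'' hprec).P j)
        ⟨n, Nat.lt_succ_of_lt (Nat.lt_succ_self n)⟩) ≫
      (x' ≫ A.str) ≫ T.map (F.map h) =
      Sigma.ι (fun j : Fin (n + 1) => Q.P j) ⟨n, by omega⟩ ≫ r ≫ A.str ≫ T.map (F.map h) := by
    have h1 : (eqToHom (extP_low Q Y' (j := n) (by omega)).symm ≫
        Sigma.ι (fun j : Fin (n + 1 + 1) => (extPath Q Y' f'' hprec).P j)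
          ⟨n, Nat.lt_succ_of_lt (Nat.lt_succ_self n)⟩) ≫ x' =
        Sigma.ι (fun j : Fin (n + 1) => Q.P j) ⟨n, by omega⟩ ≫ r := by
      have h2 : Sigma.ι (fun j : Fin (n + 1) => Q.P j) ⟨n, by omega⟩ ≫
          Jmor T F η bot (extMor Q Y' f'' hprec) ≫ x' =
          Sigma.ι (fun j : Fin (n + 1) => Q.P j) ⟨n, by omega⟩ ≫ r := by
        erw [hx'1]
      erw [← h2, ← Category.assoc, ι_Jmor]
      dsimp only [extMor]
      rfl
    simp only [← Category.assoc] at h1 ⊢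
    repeat erw [← Category.assoc]
    erw [h1]
  erw [hA, hB] at hstep
  exact hstep

end Aux4

section Theorems

variable [HasPullbacks C]

theorem open_is_hom
    (T F : C ⥤ C) (I : C) (S : Set C)
    (hiso : ∀ {X Y : C}, X ∈ S → (X ≅ Y) → Y ∈ S) (hI : I ∈ S)
    (η : 𝟭 C ⟶ T) (bot : (Functor.const C).obj (⊤_ C) ⟶ T)
    (ord : HomOrder T)
    (ax1 : AdmitsPreciseFact (Fp1 F) S)
    (ax2 : ∀ (ι : Type v) {Y Z : C} (Xf : ι → C) (e : ∀ i, Xf i ⟶ Y),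
      (∀ {W : C} (u v : Y ⟶ W), (∀ i, e i ≫ u = e i ≫ v) → u = v) →
      ∀ (f g : Y ⟶ T.obj Z), (∀ i, ord.le (e i ≫ f) (e i ≫ g)) → ord.le f g)
    (ax3 : ∀ {X Y : C} (f : X ⟶ T.obj Y), ord.le (terminal.from X ≫ bot.app Y) f)
    (ax4 : ∀ {X Y : C} (f : X ⟶ T.obj Y), X ∈ S →
      IsLUBhom ord {g | ∃ f' : X ⟶ Y ⨿ ⊤_ C, g = f' ≫ cop T η bot Y ∧ ord.le g f} f)
    (ax5 : ∀ {A X Y : C}, A ∈ S → ∀ (x : A ⟶ T.obj X) (y : A ⟶ Y ⨿ ⊤_ C) (h : X ⟶ Y),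
      ord.le (y ≫ cop T η bot Y) (x ≫ T.map h) →
      ∃ x' : A ⟶ X ⨿ ⊤_ C, ord.le (x' ≫ cop T η bot X) x ∧
        x' ≫ coprod.map h (𝟙 (⊤_ C)) = y)
    (A B : Coalg T F I) (h : A.X ⟶ B.X)
    (hlax : IsLaxHom ord A B h)
    (hreach : PathReachable η bot ord A)
    (hopen : IsPathOpen η bot ord h) :
    A.str ≫ T.map (F.map h) = h ≫ B.str := by
  apply hreach
  intro n Pp r hr
  apply ord.le_antisymm
  · exact homle_comp_l ord r hlax.2
  · apply le_sigma ord ax2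
    intro k
    have hk : (k : ℕ) ≤ n := Nat.lt_succ_iff.mp k.isLt
    have hrk : IsLaxHom ord (Jobj T F η bot (truncPath Pp (k : ℕ) hk)) A
        (Jmor T F η bot (truncMor Pp (k : ℕ) hk) ≫ r) :=
      laxhom_comp ord (Jmor_lax η bot ord ax2 ax3 (truncMor Pp (k : ℕ) hk)) hr
    have hkey := key_top η bot ord S hiso hI ax1 ax2 ax3 ax4 hlax hopen
      (truncPath Pp (k : ℕ) hk) (Jmor T F η bot (truncMor Pp (k : ℕ) hk) ≫ r) hrk
    have hE0 : Sigma.ι (fun j : Fin ((k : ℕ) + 1) => (truncPath Pp (k : ℕ) hk).P j)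
        ⟨(k : ℕ), by omega⟩ ≫ Jmor T F η bot (truncMor Pp (k : ℕ) hk) =
        Sigma.ι (fun j : Fin (n + 1) => Pp.P j) k := by
      rw [ι_Jmor]
      dsimp only [truncMor]
      erw [Category.id_comp]
    have hE1 : Sigma.ι (fun j : Fin (n + 1) => Pp.P j) k ≫ (r ≫ (h ≫ B.str)) =
        Sigma.ι (fun j : Fin ((k : ℕ) + 1) => (truncPath Pp (k : ℕ) hk).P j)
          ⟨(k : ℕ), by omega⟩ ≫ (Jmor T F η bot (truncMor Pp (k : ℕ) hk) ≫ r) ≫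
          h ≫ B.str := by
      rw [← hE0]
      simp only [Category.assoc]
      repeat erw [Category.assoc]
      rfl
    have hE2 : Sigma.ι (fun j : Fin (n + 1) => Pp.P j) k ≫
        (r ≫ (A.str ≫ T.map (F.map h))) =
        Sigma.ι (fun j : Fin ((k : ℕ) + 1) => (truncPath Pp (k : ℕ) hk).P j)
          ⟨(k : ℕ), by omega⟩ ≫ (Jmor T F η bot (truncMor Pp (k : ℕ) hk) ≫ r) ≫
          A.str ≫ T.map (F.map h) := by
      rw [← hE0]
      simp only [Category.assoc]
      repeat erw [Category.assoc]
      rfl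
    erw [hE1, hE2]
    exact hkey

end Theorems
end

section
/- Under the framework assumptions (Ax1)–(Ax5), let (P,p) be a path of length n, let (X, ξ, x₀) be an I-pointed TF-coalgebra, and let x_k : P_k → X (k ≤ n) be morphisms with x₀ : I = P₀ → X equal to the pointing of X. Then the copairing [x_k]_{k ≤ n} : ∐_{k ≤ n} P_k → X is a run, i.e. a lax homomorphism J(P,p) → (X, ξ, x₀), if and only if for every k < n one has [η_X, ⊥_X] ∘ (F x_{k+1} + 1) ∘ p_k ⊑ ξ ∘ x_k. -/
open CategoryTheory CategoryTheory.Limits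

universe v u

variable {C : Type u} [Category.{v} C]

variable [HasFiniteCoproducts C] [HasTerminal C]

section Aux

lemma le_precomp {T : C ⥤ C} (ord : HomOrder T) {X' X Y : C} (e : X' ⟶ X)
    {f g : X ⟶ T.obj Y} (h : ord.le f g) : ord.le (e ≫ f) (e ≫ g) := by
  have := ord.le_comp e (𝟙 Y) h
  simpa using this

variable [HasFiniteCoproducts C] [HasTerminal C] in
lemma cop_natural (T : C ⥤ C) (η : 𝟭 C ⟶ T)
    (bot : (Functor.const C).obj (⊤_ C) ⟶ T) {Y Y' : C} (h : Y ⟶ Y') :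
    cop T η bot Y ≫ T.map h = coprod.map h (𝟙 _) ≫ cop T η bot Y' := by
  have hb : bot.app Y ≫ T.map h = bot.app Y' := by
    have := bot.naturality h
    simpa using this.symm
  have he : η.app Y ≫ T.map h = h ≫ η.app Y' := by simpa using (η.naturality h).symm
  ext <;> simp [cop, hb, he]

end Aux

section Theorems

variable [HasPullbacks C]

theorem run_iff_stepwise
    (T F : C ⥤ C) (I : C) (S : Set C)
    (hiso : ∀ {X Y : C}, X ∈ S → (X ≅ Y) → Y ∈ S) (hI : I ∈ S)
    (η : 𝟭 C ⟶ T) (bot : (Functor.const C).obj (⊤_ C) ⟶ T)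
    (ord : HomOrder T)
    (ax1 : AdmitsPreciseFact (Fp1 F) S)
    (ax2 : ∀ (ι : Type v) {Y Z : C} (Xf : ι → C) (e : ∀ i, Xf i ⟶ Y),
      (∀ {W : C} (u v : Y ⟶ W), (∀ i, e i ≫ u = e i ≫ v) → u = v) →
      ∀ (f g : Y ⟶ T.obj Z), (∀ i, ord.le (e i ≫ f) (e i ≫ g)) → ord.le f g)
    (ax3 : ∀ {X Y : C} (f : X ⟶ T.obj Y), ord.le (terminal.from X ≫ bot.app Y) f)
    (ax4 : ∀ {X Y : C} (f : X ⟶ T.obj Y), X ∈ S →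
      IsLUBhom ord {g | ∃ f' : X ⟶ Y ⨿ ⊤_ C, g = f' ≫ cop T η bot Y ∧ ord.le g f} f)
    (ax5 : ∀ {A X Y : C}, A ∈ S → ∀ (x : A ⟶ T.obj X) (y : A ⟶ Y ⨿ ⊤_ C) (h : X ⟶ Y),
      ord.le (y ≫ cop T η bot Y) (x ≫ T.map h) →
      ∃ x' : A ⟶ X ⨿ ⊤_ C, ord.le (x' ≫ cop T η bot X) x ∧
        x' ≫ coprod.map h (𝟙 (⊤_ C)) = y)
    {n : ℕ} (Pp : FPath1 F I n) (A : Coalg T F I)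
    (x : ∀ k, k ≤ n → (Pp.P k ⟶ A.X))
    (hx0 : x 0 (Nat.zero_le n) = eqToHom Pp.hP0 ≫ A.pt) :
    IsLaxHom ord (Jobj T F η bot Pp) A
        (Sigma.desc fun k : Fin (n + 1) => x k (by omega)) ↔
      ∀ k (h : k < n),
        ord.le
          (Pp.p k h ≫ coprod.map (F.map (x (k + 1) h)) (𝟙 (⊤_ C)) ≫
            cop T η bot (F.obj A.X))
          (x k h.le ≫ A.str) := by
  constructor
  · rintro ⟨-, hle⟩ k hk
    have hk1 : k + 1 < n + 1 := by omega
    have h1 := le_precomp ord (Sigma.ι (fun j : Fin (n+1) => Pp.P j) ⟨k, by omega⟩) hle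
    have lhs_eq : Sigma.ι (fun j : Fin (n+1) => Pp.P j) ⟨k, by omega⟩ ≫
        ((Jobj T F η bot Pp).str ≫
          T.map (F.map (Sigma.desc fun j : Fin (n + 1) => x j (by omega)))) =
        Pp.p k hk ≫ coprod.map (F.map (x (k + 1) hk)) (𝟙 (⊤_ C)) ≫
          cop T η bot (F.obj A.X) := by
      simp only [Jobj, ← Category.assoc, colimit.ι_desc]
      simp only [Cofan.mk_ι_app, dif_pos hk, Category.assoc, cop_natural,
        ← Functor.map_comp, colimit.ι_desc]
      erw [Category.assoc, cop_natural, coprod.map_map_assoc, ← Functor.map_comp, colimit.ι_desc]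
      simp
      rfl
    have rhs_eq : Sigma.ι (fun j : Fin (n+1) => Pp.P j) ⟨k, by omega⟩ ≫
        ((Sigma.desc fun j : Fin (n + 1) => x j (by omega)) ≫ A.str) =
        x k hk.le ≫ A.str := by
      simp [← Category.assoc]
    erw [lhs_eq, rhs_eq] at h1
    exact h1
  · intro hstep
    constructor
    · simp only [Jobj, Category.assoc, colimit.ι_desc, Cofan.mk_ι_app]
      rw [hx0]
      simp
    · apply ax2 (ULift.{v} (Fin (n + 1))) (fun j => Pp.P j.down)
        (fun j => Sigma.ι (fun j : Fin (n+1) => Pp.P j) j.down)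
        (fun u v h => Sigma.hom_ext u v (fun j => h ⟨j⟩))
      intro k'
      obtain ⟨k⟩ := k'
      by_cases hk : (k : ℕ) < n
      · have lhs_eq : Sigma.ι (fun j : Fin (n+1) => Pp.P j) k ≫
            ((Jobj T F η bot Pp).str ≫
              T.map (F.map (Sigma.desc fun j : Fin (n + 1) => x j (by omega)))) =
            Pp.p k hk ≫ coprod.map (F.map (x ((k : ℕ) + 1) hk)) (𝟙 (⊤_ C)) ≫
              cop T η bot (F.obj A.X) := by
          simp only [Jobj, ← Category.assoc, colimit.ι_desc]
          simp only [Cofan.mk_ι_app, dif_pos hk, Category.assoc, cop_natural,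
            ← Functor.map_comp, colimit.ι_desc]
          erw [Category.assoc, cop_natural, coprod.map_map_assoc, ← Functor.map_comp, colimit.ι_desc]
          simp
          rfl
        have rhs_eq : Sigma.ι (fun j : Fin (n+1) => Pp.P j) k ≫
            ((Sigma.desc fun j : Fin (n + 1) => x j (by omega)) ≫ A.str) =
            x (k : ℕ) hk.le ≫ A.str := by
          simp [← Category.assoc]
        erw [lhs_eq, rhs_eq]
        exact hstep k hk
      · have lhs_eq : Sigma.ι (fun j : Fin (n+1) => Pp.P j) k ≫
            ((Jobj T F η bot Pp).str ≫
              T.map (F.map (Sigma.desc fun j : Fin (n + 1) => x j (by omega)))) =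
            terminal.from (Pp.P k) ≫ bot.app (F.obj A.X) := by
          simp only [Jobj, ← Category.assoc, colimit.ι_desc]
          simp only [Cofan.mk_ι_app, dif_neg hk, Category.assoc,
            ← NatTrans.naturality]
          simp
        erw [lhs_eq]
        exact ax3 _

end Theorems
end
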